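/- arXiv:1106.4531 — 9 statements merged into one kernel-verified Lean document; each statement's English description precedes it below -/
import Mathlib

section
/- If J : ℝ → ℝ is nonnegative, continuous, integrable with ∫J = 1 and finite first moment, and u : ℝ → ℝ is bounded and measurable, then for all x, y ∈ ℝ: ∫_{y}^{x} ∫_{ℝ} J(s-t)(u(t)-u(s)) dt ds = ∫_{0}^{1} ∫_{ℝ} J(-z) z (u(x+zη) - u(y+zη)) dz dη. -/
/-!
The substitution `t = s + z` turns the left side into
`∫ s in y..x, ∫ z, J (-z) * (u (s + z) - u s)`. Since `u` is bounded and `J` has a finite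
first moment, both sides are absolutely integrable on `[y, x] × ℝ` resp. `[0, 1] × ℝ`, so Fubini
reduces the claim to a fixed `z`, where both `∫ s in y..x, (u (s + z) - u s)` and
`z * ∫ η in 0..1, (u (x + z * η) - u (y + z * η))` equal
`∫ s in x..x + z, u s - ∫ s in y..y + z, u s`.
-/

open MeasureTheory

variable {E : Type*} [NormedAddCommGroup E]

theorem MeasureTheory.StronglyMeasurable.intervalIntegrable_of_norm_le {v : ℝ → E}
    (hv : StronglyMeasurable v) {C : ℝ} (hC : ∀ t, ‖v t‖ ≤ C) (a b : ℝ) :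
    IntervalIntegrable v volume a b :=
  intervalIntegrable_const.mono_fun' hv.aestronglyMeasurable (ae_of_all _ hC)

theorem intervalIntegral_integral_swap_of_norm_le [NormedSpace ℝ E] {α : Type*} [MeasurableSpace α]
    {μ : Measure α} [SFinite μ] {f : ℝ → α → E} {g : α → ℝ}
    (hf : StronglyMeasurable (Function.uncurry f)) (hg : Integrable g μ)
    (hfg : ∀ s z, ‖f s z‖ ≤ g z) (a b : ℝ) :
    ∫ s in a..b, (∫ z, f s z ∂μ) = ∫ z, (∫ s in a..b, f s z) ∂μ := by
  have : IsFiniteMeasure (volume.restrict (Set.uIoc a b)) :=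
    isFiniteMeasure_restrict.2 (by rw [Set.uIoc]; exact measure_Ioc_lt_top.ne)
  exact intervalIntegral_integral_swap <| ((integrable_const (1 : ℝ)).mul_prod hg).mono'
    hf.aestronglyMeasurable (ae_of_all _ fun p => (hfg p.1 p.2).trans_eq (one_mul _).symm)

theorem intervalIntegral_sub_comp_add_right_eq_smul [NormedSpace ℝ E] [CompleteSpace E]
    {u : ℝ → E} (hu : StronglyMeasurable u) {C : ℝ} (hC : ∀ t, ‖u t‖ ≤ C) (x y z : ℝ) :
    ∫ s in y..x, (u (s + z) - u s) = z • ∫ η in (0:ℝ)..1, (u (x + z * η) - u (y + z * η)) := by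
  have hint : ∀ c d a b : ℝ, IntervalIntegrable (fun t => u (c + d * t)) volume a b :=
    fun c d => (hu.comp_measurable (by fun_prop : Measurable fun t : ℝ => c + d * t)
      ).intervalIntegrable_of_norm_le fun t => hC _
  have hu' : ∀ a b : ℝ, IntervalIntegrable u volume a b := hu.intervalIntegrable_of_norm_le hC
  have hshift : ∀ a b : ℝ, IntervalIntegrable (fun s => u (s + z)) volume a b := by
    simpa only [one_mul, add_comm z] using hint z 1
  rw [intervalIntegral.integral_sub (hshift _ _) (hu' _ _),
    intervalIntegral.integral_sub (hint _ _ _ _) (hint _ _ _ _), smul_sub,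
    intervalIntegral.smul_integral_comp_add_mul, intervalIntegral.smul_integral_comp_add_mul,
    intervalIntegral.integral_comp_add_right,
    intervalIntegral.integral_interval_sub_interval_comm (hu' _ _) (hu' _ _) (hu' _ _),
    intervalIntegral.integral_symm y (y + z), intervalIntegral.integral_symm x (x + z)]
  simp only [mul_zero, add_zero, mul_one]
  abel

theorem stmt0_general (J u : ℝ → ℝ)
    (hJc : Continuous J)
    (hJint : Integrable J)
    (hJmom : Integrable (fun z => |z| * J z))
    (hum : Measurable u) (hub : ∃ C, ∀ x, |u x| ≤ C) (x y : ℝ) :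
    (∫ s in y..x, ∫ t, J (s - t) * (u t - u s)) =
      ∫ η in (0:ℝ)..1, ∫ z, J (-z) * z * (u (x + z * η) - u (y + z * η)) := by
  obtain ⟨C, hC⟩ := hub
  have hdiff : ∀ a b, |u a - u b| ≤ 2 * C := fun a b =>
    (abs_sub _ _).trans (by linarith [hC a, hC b])
  have htranslate : ∀ s, ∫ t, J (s - t) * (u t - u s) = ∫ z, J (-z) * (u (s + z) - u s) :=
    fun s => by
      rw [← integral_add_left_eq_self _ s]
      simp only [sub_add_cancel_left]
  rw [intervalIntegral.integral_congr fun s _ => htranslate s,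
    intervalIntegral_integral_swap_of_norm_le (by fun_prop : Measurable _).stronglyMeasurable
      (hJint.comp_neg.norm.mul_const (2 * C)) (fun s z => ?_),
    intervalIntegral_integral_swap_of_norm_le (by fun_prop : Measurable _).stronglyMeasurable
      (hJmom.comp_neg.norm.mul_const (2 * C)) (fun η z => ?_)]
  · refine integral_congr_ae (ae_of_all _ fun z => ?_)
    simp only [intervalIntegral.integral_const_mul, mul_assoc]
    rw [intervalIntegral_sub_comp_add_right_eq_smul hum.stronglyMeasurable
      (fun t => (Real.norm_eq_abs _).trans_le (hC t)), smul_eq_mul]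
  · simp only [norm_mul, Real.norm_eq_abs, abs_neg, abs_abs]
    rw [mul_comm |z|]
    gcongr
    exact hdiff _ _
  · simp only [norm_mul, Real.norm_eq_abs]
    gcongr
    exact hdiff _ _

theorem stmt0 (J u : ℝ → ℝ)
    (hJc : Continuous J) (hJ0 : ∀ z, 0 ≤ J z)
    (hJint : Integrable J) (hJ1 : ∫ z, J z = 1)
    (hJmom : Integrable (fun z => |z| * J z))
    (hum : Measurable u) (hub : ∃ C, ∀ x, |u x| ≤ C) (x y : ℝ) :
    (∫ s in y..x, ∫ t, J (s - t) * (u t - u s)) =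
      ∫ η in (0:ℝ)..1, ∫ z, J (-z) * z * (u (x + z * η) - u (y + z * η)) :=
  stmt0_general J u hJc hJint hJmom hum hub x y
end

section
/- Under the hypotheses of the previous statement (bounded nonnegative solution u of J⋆u - u - cu' + f(u) = 0 with u(-∞)=0 and f'(0)>0), the function u is integrable on (-∞, 0], i.e. ∫_{-∞}^0 u(s) ds < ∞. -/
open MeasureTheory Real Filter Set Topology

/-!
Integrating the equation over `[a, b]` gives
`∫_a^b f(u) = ∫_a^b (u - J ⋆ u) + c (u b - u a)`. By Fubini, `∫_a^b J ⋆ u` is the `J`-average of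
the integrals of `u` over the translates `[a - z, b - z]`, each within `2|z|` of `∫_a^b u`; hence
`∫_a^b f(u) ≤ 2 ∫ |z| |J z| + |c|` uniformly in `a ≤ b`. As `f s ≥ f'(0) s / 2` for small `s ≥ 0`
and `u → 0` at `-∞`, this bounds `∫_a^{x₁} u` uniformly in `a` for some `x₁`.
-/

theorem eventually_mul_le_of_hasDerivAt {f : ℝ → ℝ} {f' α : ℝ} (hf : HasDerivAt f f' 0)
    (hf0 : f 0 = 0) (hα : α < f') : ∀ᶠ s in 𝓝 0, 0 ≤ s → α * s ≤ f s := by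
  rw [← nhdsNE_sup_pure, eventually_sup]
  refine ⟨?_, by simp [hf0]⟩
  filter_upwards [(hasDerivAt_iff_tendsto_slope.1 hf).eventually (eventually_gt_nhds hα),
    self_mem_nhdsWithin] with s hslope hs0 hs
  have hpos : 0 < s := lt_of_le_of_ne hs (Ne.symm hs0)
  rw [slope_def_field, hf0, sub_zero, sub_zero, lt_div_iff₀ hpos] at hslope
  linarith

theorem intervalIntegrable_of_abs_le {u : ℝ → ℝ} {B : ℝ} (hu : Measurable u)
    (hB : ∀ x, |u x| ≤ B) (a b : ℝ) : IntervalIntegrable u volume a b :=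
  intervalIntegrable_const.mono_fun' hu.aestronglyMeasurable (ae_of_all _ hB)

theorem abs_intervalIntegral_sub_comp_sub_le {u : ℝ → ℝ} {B : ℝ} (hu : Measurable u)
    (hB : ∀ x, |u x| ≤ B) (a b z : ℝ) :
    |(∫ x in a..b, u x) - ∫ x in a..b, u (x - z)| ≤ 2 * B * |z| := by
  have hedge : ∀ t, |∫ x in t..t - z, u x| ≤ B * |z| := fun t => by
    simpa [abs_sub_comm] using intervalIntegral.norm_integral_le_of_norm_le_const
      (a := t) (b := t - z) fun x _ => (Real.norm_eq_abs _).trans_le (hB x)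
  have hii := intervalIntegrable_of_abs_le hu hB
  rw [intervalIntegral.integral_comp_sub_right,
    intervalIntegral.integral_interval_sub_interval_comm (hii _ _) (hii _ _) (hii _ _)]
  calc _ ≤ |∫ x in a..a - z, u x| + |∫ x in b..b - z, u x| := abs_sub _ _
    _ ≤ B * |z| + B * |z| := add_le_add (hedge a) (hedge b)
    _ = 2 * B * |z| := by ring

theorem integrable_uncurry_mul_comp_sub {J u : ℝ → ℝ} {B : ℝ} (hJ : Integrable J)
    (hu : Measurable u) (hB : ∀ x, |u x| ≤ B) (a b : ℝ) :
    Integrable (Function.uncurry fun x z => J z * u (x - z))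
      ((volume.restrict (Ioc a b)).prod volume) := by
  have hB_int : Integrable (fun _ : ℝ => B) (volume.restrict (Ioc a b)) :=
    integrableOn_const measure_Ioc_lt_top.ne
  refine Integrable.mono' (g := fun p => B * ‖J p.2‖) ?_ ?_ (ae_of_all _ fun p => ?_)
  · exact hB_int.mul_prod hJ.norm
  · exact hJ.aestronglyMeasurable.comp_snd.mul
      (hu.comp (measurable_fst.sub measurable_snd)).aestronglyMeasurable
  · rw [Function.uncurry_apply_pair, norm_mul, mul_comm]
    exact mul_le_mul_of_nonneg_right (hB _) (norm_nonneg _)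

theorem integral_comp_sub_mul_comm (J u : ℝ → ℝ) (x : ℝ) :
    ∫ y, J (x - y) * u y = ∫ z, J z * u (x - z) := by
  simpa using integral_sub_left_eq_self (fun z => J z * u (x - z)) volume x

theorem intervalIntegrable_convolution {J u : ℝ → ℝ} {B : ℝ} (hJ : Integrable J)
    (hu : Measurable u) (hB : ∀ x, |u x| ≤ B) (a b : ℝ) :
    IntervalIntegrable (fun x => ∫ y, J (x - y) * u y) volume a b := by
  simp_rw [integral_comp_sub_mul_comm J u]
  exact ⟨(integrable_uncurry_mul_comp_sub hJ hu hB a b).integral_prod_left,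
    (integrable_uncurry_mul_comp_sub hJ hu hB b a).integral_prod_left⟩

theorem abs_intervalIntegral_sub_convolution_le {J u : ℝ → ℝ} {B : ℝ} (hJ : Integrable J)
    (hJ1 : ∫ z, J z = 1) (hJmom : Integrable fun z => |z| * J z) (hu : Measurable u)
    (hB : ∀ x, |u x| ≤ B) {a b : ℝ} (hab : a ≤ b) :
    |(∫ x in a..b, u x) - ∫ x in a..b, ∫ y, J (x - y) * u y| ≤ 2 * B * ∫ z, |z| * |J z| := by
  have hF := integrable_uncurry_mul_comp_sub hJ hu hB a b
  have hswap : ∫ x in a..b, ∫ y, J (x - y) * u y = ∫ z, J z * ∫ x in a..b, u (x - z) := by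
    simp_rw [integral_comp_sub_mul_comm J u, intervalIntegral.integral_of_le hab,
      integral_integral_swap hF, integral_const_mul]
  have hshift : Integrable fun z => J z * ∫ x in a..b, u (x - z) := by
    simpa [intervalIntegral.integral_of_le hab, integral_const_mul] using hF.integral_prod_right
  have hmom : Integrable fun z => |z| * |J z| := by simpa [abs_mul] using hJmom.norm
  calc |(∫ x in a..b, u x) - ∫ x in a..b, ∫ y, J (x - y) * u y|
      = |∫ z, J z * ((∫ x in a..b, u x) - ∫ x in a..b, u (x - z))| := by
        simp_rw [mul_sub]
        rw [integral_sub (hJ.mul_const _) hshift, integral_mul_const, hJ1, one_mul, hswap]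
    _ ≤ ∫ z, 2 * B * (|z| * |J z|) := by
        rw [← Real.norm_eq_abs]
        refine norm_integral_le_of_norm_le (hmom.const_mul _) (ae_of_all _ fun z => ?_)
        rw [norm_mul, Real.norm_eq_abs, Real.norm_eq_abs]
        nlinarith [abs_intervalIntegral_sub_comp_sub_le hu hB a b z, abs_nonneg (J z)]
    _ = 2 * B * ∫ z, |z| * |J z| := integral_const_mul _ _

theorem intervalIntegral_reaction_eq {J f u : ℝ → ℝ} {c B : ℝ} (hJ : Integrable J)
    (hf : Continuous f) (hud : Differentiable ℝ u) (hB : ∀ x, |u x| ≤ B)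
    (heq : ∀ x, (∫ y, J (x - y) * u y) - u x - c * deriv u x + f (u x) = 0) (a b : ℝ) :
    ∫ x in a..b, f (u x) =
      ((∫ x in a..b, u x) - ∫ x in a..b, ∫ y, J (x - y) * u y) + c * (u b - u a) := by
  have hu := hud.continuous.intervalIntegrable (μ := volume) a b
  have hconv := intervalIntegrable_convolution hJ hud.continuous.measurable hB a b
  have hcu : IntervalIntegrable (fun x => c * deriv u x) volume a b := by
    refine (((hf.comp hud.continuous).intervalIntegrable a b).add (hconv.sub hu)).congr ?_
    exact fun x _ => by simp only [Function.comp_apply]; linarith [heq x]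
  have hftc : ∫ x in a..b, c * deriv u x = c * (u b - u a) := by
    rcases eq_or_ne c 0 with rfl | hc
    · simp
    rw [intervalIntegral.integral_const_mul,
      intervalIntegral.integral_deriv_eq_sub (fun x _ => hud x)]
    simpa [hc] using hcu.const_mul c⁻¹
  rw [← hftc, ← intervalIntegral.integral_sub hu hconv,
    ← intervalIntegral.integral_add (hu.sub hconv) hcu]
  exact intervalIntegral.integral_congr fun x _ => by linarith [heq x]

theorem integrableOn_Iic_of_le_of_intervalIntegral_le {g h : ℝ → ℝ} {b C : ℝ}
    (hg : Continuous g) (hh : Continuous h) (hg0 : ∀ x, 0 ≤ g x) (hgh : ∀ x ≤ b, g x ≤ h x)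
    (hC : ∀ a ≤ b, ∫ x in a..b, h x ≤ C) : IntegrableOn g (Iic b) := by
  refine integrableOn_Iic_of_intervalIntegral_norm_bounded C b (fun _ => hg.integrableOn_Ioc)
    tendsto_id ?_
  filter_upwards [eventually_le_atBot b] with a hab
  calc ∫ x in a..b, ‖g x‖ ≤ ∫ x in a..b, h x :=
        intervalIntegral.integral_mono_on hab (hg.norm.intervalIntegrable a b)
          (hh.intervalIntegrable a b) fun x hx => by
            rw [Real.norm_of_nonneg (hg0 x)]; exact hgh x hx.2
    _ ≤ C := hC a hab

theorem stmt2_general (J f u : ℝ → ℝ) (c : ℝ)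
    (hJint : Integrable J) (hJ1 : ∫ z, J z = 1)
    (hJmom : Integrable (fun z => |z| * J z))
    (hf : ContDiff ℝ 1 f) (hf0 : f 0 = 0) (hf0' : 0 < deriv f 0)
    (hurange : ∀ x, u x ∈ Set.Icc (0:ℝ) 1)
    (hud : Differentiable ℝ u)
    (heq : ∀ x, (∫ y, J (x - y) * u y) - u x - c * deriv u x + f (u x) = 0)
    (hlim : Tendsto u atBot (nhds 0)) :
    IntegrableOn u (Set.Iic 0) := by
  have huc : Continuous u := hud.continuous
  have hB : ∀ x, |u x| ≤ 1 := fun x => abs_le.2 ⟨by linarith [(hurange x).1], (hurange x).2⟩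
  set M := ∫ z, |z| * |J z|
  have hbound : ∀ a b, a ≤ b → ∫ x in a..b, f (u x) ≤ 2 * M + |c| := by
    intro a b hab
    have hconv := abs_intervalIntegral_sub_convolution_le hJint hJ1 hJmom huc.measurable hB hab
    have hdiff : |u b - u a| ≤ 1 := abs_sub_le_iff.2
      ⟨by linarith [(hurange a).1, (hurange b).2], by linarith [(hurange a).2, (hurange b).1]⟩
    have hboundary : c * (u b - u a) ≤ |c| := (le_abs_self _).trans <| by
      rw [abs_mul]; exact mul_le_of_le_one_right (abs_nonneg c) hdiff
    rw [intervalIntegral_reaction_eq hJint hf.continuous hud hB heq]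
    linarith [(le_abs_self _).trans hconv]
  set α := deriv f 0 / 2
  have hα : 0 < α := by positivity
  have hfu : ∀ᶠ x in atBot, α * u x ≤ f (u x) :=
    (hlim.eventually (eventually_mul_le_of_hasDerivAt
      (hf.differentiable one_ne_zero 0).hasDerivAt hf0 (half_lt_self hf0'))).mono
      fun x hx => hx (hurange x).1
  obtain ⟨x₁, hx₁⟩ := eventually_atBot.1 hfu
  have hIic : IntegrableOn u (Iic x₁) := by
    refine integrableOn_Iic_of_le_of_intervalIntegral_le (h := fun x => α⁻¹ * f (u x))
      (C := α⁻¹ * (2 * M + |c|)) huc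
      (continuous_const.mul (hf.continuous.comp huc)) (fun x => (hurange x).1)
      (fun x hx => (le_inv_mul_iff₀ hα).2 (hx₁ x hx)) fun a ha => ?_
    rw [intervalIntegral.integral_const_mul]
    exact mul_le_mul_of_nonneg_left (hbound a x₁ ha) (inv_nonneg.2 hα.le)
  exact (hIic.union huc.integrableOn_Icc).mono_set Iic_subset_Iic_union_Icc

theorem stmt2 (J f u : ℝ → ℝ) (c : ℝ)
    (hJc : Continuous J) (hJ0 : ∀ z, 0 ≤ J z)
    (hJint : Integrable J) (hJ1 : ∫ z, J z = 1)
    (hJmom : Integrable (fun z => |z| * J z))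
    (hf : ContDiff ℝ 1 f) (hf0 : f 0 = 0) (hf0' : 0 < deriv f 0)
    (hfpos : ∀ s ∈ Set.Icc (0:ℝ) 1, 0 ≤ f s)
    (hurange : ∀ x, u x ∈ Set.Icc (0:ℝ) 1)
    (hud : Differentiable ℝ u)
    (heq : ∀ x, (∫ y, J (x - y) * u y) - u x - c * deriv u x + f (u x) = 0)
    (hlim : Tendsto u atBot (nhds 0)) :
    IntegrableOn u (Set.Iic 0) :=
  stmt2_general J f u c hJint hJ1 hJmom hf hf0 hf0' hurange hud heq hlim
end

section
/- Let J satisfy (j1) and let f be C¹ with f(0)=0 and f'(0) > 1. Then there is no positive bounded solution u : ℝ → (0,1] of J⋆u - u + f(u) = 0 with lim_{x→-∞} u(x) = 0. -/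
/-! Near `0` the nonlinearity pushes up: `f t > t` for small `t > 0` because `f'(0) > 1`. Since `u`
tends to `0` at `-∞` while staying positive, some `u x` is that small; there the equation forces
the convolution `J ⋆ u = u - f(u)` to be negative, whereas `J ≥ 0` and `u > 0` make it
nonnegative. -/

open MeasureTheory Real Filter Topology

theorem HasDerivAt.eventually_add_mul_lt {f : ℝ → ℝ} {f' c x : ℝ} (hf : HasDerivAt f f' x)
    (hc : c < f') : ∀ᶠ t in 𝓝[>] x, f x + c * (t - x) < f t := by
  have hslope : ∀ᶠ t in 𝓝[>] x, c < slope f x t :=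
    ((hasDerivAt_iff_tendsto_slope_left_right.mp hf).2).eventually (eventually_gt_nhds hc)
  filter_upwards [hslope, self_mem_nhdsWithin] with t ht (hxt : x < t)
  rw [slope_def_field, lt_div_iff₀ (sub_pos.mpr hxt)] at ht
  linarith

theorem stmt5_general (J f : ℝ → ℝ)
    (hJ0 : ∀ z, 0 ≤ J z)
    (hf : ContDiff ℝ 1 f) (hf0 : f 0 = 0) (hf0' : 1 < deriv f 0) :
    ¬ ∃ u : ℝ → ℝ, (∀ x, 0 < u x ∧ u x ≤ 1) ∧
      (∀ x, (∫ y, J (x - y) * u y) - u x + f (u x) = 0) ∧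
      Tendsto u atBot (nhds 0) := by
  rintro ⟨u, hu, heq, hlim⟩
  have hf_le : ∀ x, f (u x) ≤ u x := fun x => by
    have hconv : 0 ≤ ∫ y, J (x - y) * u y :=
      integral_nonneg fun y => mul_nonneg (hJ0 _) (hu y).1.le
    linarith [heq x]
  have hu_right : Tendsto u atBot (𝓝[>] 0) :=
    tendsto_nhdsWithin_iff.mpr ⟨hlim, .of_forall fun x => (hu x).1⟩
  have hf_gt : ∀ᶠ t in 𝓝[>] (0 : ℝ), f 0 + 1 * (t - 0) < f t :=
    ((hf.differentiable one_ne_zero) 0).hasDerivAt.eventually_add_mul_lt hf0'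
  obtain ⟨x, hx⟩ := (hu_right.eventually hf_gt).exists
  rw [hf0, one_mul, sub_zero, zero_add] at hx
  linarith [hf_le x]

theorem stmt5 (J f : ℝ → ℝ)
    (hJc : Continuous J) (hJ0 : ∀ z, 0 ≤ J z)
    (hJint : Integrable J) (hJ1 : ∫ z, J z = 1)
    (hJmom : Integrable (fun z => |z| * J z))
    (hf : ContDiff ℝ 1 f) (hf0 : f 0 = 0) (hf0' : 1 < deriv f 0) :
    ¬ ∃ u : ℝ → ℝ, (∀ x, 0 < u x ∧ u x ≤ 1) ∧
      (∀ x, (∫ y, J (x - y) * u y) - u x + f (u x) = 0) ∧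
      Tendsto u atBot (nhds 0) :=
  stmt5_general J f hJ0 hf hf0 hf0'
end

section
/- Let J be continuous, nonnegative, with ∫J = 1, satisfying J(a) > 0 and J(b) > 0 for some a < 0 < b (hypothesis (MP)), and let c : ℝ → ℝ be bounded. If u ∈ L^∞(ℝ) satisfies u ≤ 0 a.e. and J⋆u - u + c(x)u ≥ 0 a.e. in ℝ, then either ess sup_K u < 0 for every compact K ⊂ ℝ, or u = 0 a.e. -/
/-!
Put `w x = ∫ J (x - y) u y dy`. Then `w ≤ 0`, `w` is continuous (`J ∈ L¹`, `u ∈ L^∞`), and the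
inequality gives `(1 + ‖c‖_∞) u ≤ w` a.e. If `w` has no zero, its maximum on a compact `K` is
negative and bounds `u` away from `0` on `K`. If `w x = 0`, then `u = 0` a.e. where `J (x - ·) > 0`,
in particular near `x - a` and `x - b`; there the inequality reads `0 ≤ w`, so `w = 0` there. Hence
the shifts preserving the zero set of `w` form an additive submonoid of `ℝ` containing intervals
around `-a > 0` and `-b < 0`, which is all of `ℝ`. So `w ≡ 0`, and `u = 0` a.e. near every point.
-/

open MeasureTheory Real Filter
open Metric Set Topology

def shiftSubmonoid {M : Type*} [AddMonoid M] (Z : Set M) : AddSubmonoid M where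
  carrier := {s | ∀ x ∈ Z, x + s ∈ Z}
  zero_mem' := by simp
  add_mem' {s t} hs ht x hx := by rw [← add_assoc]; exact ht _ (hs x hx)

theorem eq_univ_of_shiftSubmonoid_eq_top {G : Type*} [AddGroup G] {Z : Set G}
    (h : shiftSubmonoid Z = ⊤) (hZ : Z.Nonempty) : Z = univ := by
  obtain ⟨x₀, hx₀⟩ := hZ
  refine eq_univ_of_forall fun x => ?_
  simpa using (h ▸ AddSubmonoid.mem_top (-x₀ + x) : -x₀ + x ∈ shiftSubmonoid Z) x₀ hx₀

namespace AddSubmonoid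

theorem Ioi_subset_of_ball_subset {S : AddSubmonoid ℝ} {p δ : ℝ} (hp : 0 < p) (hδ : 0 < δ)
    (hS : ball p δ ⊆ S) : Ioi (p ^ 2 / δ) ⊆ S := by
  intro t (ht : p ^ 2 / δ < t)
  have hpt : p ^ 2 < t * δ := (div_lt_iff₀ hδ).1 ht
  have ht0 : 0 < t := lt_of_le_of_lt (by positivity) ht
  set n := ⌈t / p⌉₊
  have hn : t ≤ n * p := (div_le_iff₀ hp).1 (Nat.le_ceil _)
  have hn' : n * p < t + p := by
    have := Nat.ceil_lt_add_one (div_pos ht0 hp).le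
    rwa [← lt_div_iff₀ hp, add_div, div_self hp.ne']
  have hn0 : (0 : ℝ) < n := pos_of_mul_pos_left (ht0.trans_le hn) hp.le
  have hpn : p < n * δ := by nlinarith
  have hmem : t / n ∈ ball p δ := by
    rw [mem_ball, dist_eq, abs_lt, lt_sub_iff_add_lt, sub_lt_iff_lt_add', lt_div_iff₀ hn0,
      div_lt_iff₀ hn0]
    constructor <;> nlinarith
  simpa [nsmul_eq_mul, mul_div_cancel₀ _ hn0.ne'] using S.nsmul_mem (hS hmem) n

theorem eq_top_of_ball_subset {S : AddSubmonoid ℝ} {p q δ ε : ℝ} (hp : 0 < p) (hq : q < 0)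
    (hδ : 0 < δ) (hε : 0 < ε) (hpS : ball p δ ⊆ S) (hqS : ball q ε ⊆ S) : S = ⊤ := by
  have hpos := S.Ioi_subset_of_ball_subset hp hδ hpS
  have hneg := (S.comap negAddMonoidHom).Ioi_subset_of_ball_subset (neg_pos.2 hq) hε
    fun y hy => hqS (by simpa [dist_neg] using hy)
  refine eq_top_iff.2 fun t _ => ?_
  set R := max (p ^ 2 / δ - t) ((-q) ^ 2 / ε) + 1
  have htR : t + R ∈ S :=
    hpos (show p ^ 2 / δ < t + R by linarith [le_max_left (p ^ 2 / δ - t) ((-q) ^ 2 / ε)])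
  have hR : -R ∈ S :=
    hneg (show (-q) ^ 2 / ε < R by linarith [le_max_right (p ^ 2 / δ - t) ((-q) ^ 2 / ε)])
  simpa using S.add_mem htR hR

end AddSubmonoid

theorem eqOn_zero_of_ae_nonneg {X : Type*} [TopologicalSpace X] [MeasurableSpace X]
    [OpensMeasurableSpace X] {μ : Measure X} [μ.IsOpenPosMeasure] {w : X → ℝ} {U : Set X}
    (hw : Continuous w) (hw0 : ∀ x, w x ≤ 0) (hU : IsOpen U) (h : ∀ᵐ x ∂μ, x ∈ U → 0 ≤ w x) :
    EqOn w 0 U := by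
  refine μ.eqOn_open_of_ae_eq ?_ hU hw.continuousOn continuousOn_const
  filter_upwards [(ae_restrict_iff' hU.measurableSet).2 h] with x hx
  exact le_antisymm (hw0 x) hx

theorem ae_of_forall_nhds_ae {X : Type*} [TopologicalSpace X] [SecondCountableTopology X]
    [MeasurableSpace X] {μ : Measure X} {P : X → Prop}
    (h : ∀ x, ∃ U ∈ 𝓝 x, ∀ᵐ y ∂μ, y ∈ U → P y) : ∀ᵐ y ∂μ, P y := by
  refine ae_iff.2 (measure_null_of_locally_null _ fun x _ => ?_)
  obtain ⟨U, hU, hP⟩ := h x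
  refine ⟨{y | ¬P y} ∩ U, inter_mem_nhdsWithin _ hU, measure_mono_null ?_ (ae_iff.1 hP)⟩
  exact fun y hy hyU => hy.1 (hyU hy.2)

theorem exists_pos_ae_restrict_le_neg {X : Type*} [TopologicalSpace X] [T2Space X]
    [MeasurableSpace X] [OpensMeasurableSpace X] {μ : Measure X} {w u : X → ℝ} {k : ℝ}
    (hw : Continuous w) (hw0 : ∀ x, w x < 0) (hk : 0 < k) (hu : ∀ᵐ x ∂μ, k * u x ≤ w x)
    {K : Set X} (hK : IsCompact K) : ∃ ε > 0, ∀ᵐ x ∂(μ.restrict K), u x ≤ -ε := by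
  rcases K.eq_empty_or_nonempty with rfl | hKne
  · exact ⟨1, one_pos, by simp⟩
  obtain ⟨xm, -, hmax⟩ := hK.exists_isMaxOn hKne hw.continuousOn
  refine ⟨-w xm / k, div_pos (neg_pos.2 (hw0 xm)) hk, ?_⟩
  filter_upwards [ae_restrict_of_ae hu, ae_restrict_mem hK.measurableSet] with x hx hxK
  rw [neg_div, neg_neg, le_div_iff₀ hk, mul_comm]
  exact hx.trans (hmax hxK)

section KernelIntegral

variable {J u : ℝ → ℝ} {B : ℝ}

theorem integrable_kernel_mul (hJ : Integrable J) (hu : AEStronglyMeasurable u)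
    (hB : ∀ y, |u y| ≤ B) (x : ℝ) : Integrable fun y => J (x - y) * u y :=
  (hJ.comp_sub_left x).mul_bdd hu (ae_of_all _ hB)

theorem abs_integral_kernel_mul_le (hJ : Integrable J) (hB : ∀ y, |u y| ≤ B) (x : ℝ) :
    |∫ y, J (x - y) * u y| ≤ (∫ z, |J z|) * B := by
  calc |∫ y, J (x - y) * u y| ≤ ∫ y, |J (x - y)| * B := by
        rw [← Real.norm_eq_abs]
        refine norm_integral_le_of_norm_le ((hJ.comp_sub_left x).abs.mul_const B)
          (ae_of_all _ fun y => ?_)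
        rw [norm_mul]
        exact mul_le_mul_of_nonneg_left (hB y) (abs_nonneg _)
    _ = (∫ z, |J z|) * B := by
        rw [integral_mul_const, integral_sub_left_eq_self (fun z => |J z|) volume x]

theorem continuous_integral_kernel_mul (hJ : Integrable J) (hu : AEStronglyMeasurable u)
    (hB : ∀ y, |u y| ≤ B) : Continuous fun x => ∫ y, J (x - y) * u y := by
  have hB0 : 0 ≤ B := (abs_nonneg _).trans (hB 0)
  have hu_loc : LocallyIntegrable u :=
    (memLp_top_of_bound hu B (ae_of_all _ hB)).locallyIntegrable le_top
  refine continuous_of_uniform_approx_of_continuous fun U hU => ?_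
  obtain ⟨ε, hε, hεU⟩ := mem_uniformity_dist.1 hU
  obtain ⟨φ, hφc, hφ, hφcont, hφint⟩ :=
    hJ.exists_hasCompactSupport_integral_sub_le (ε := ε / (2 * (B + 1))) (by positivity)
  refine ⟨fun x => ∫ y, φ (x - y) * u y, ?_, fun x => hεU ?_⟩
  · have := hφc.continuous_convolution_left (ContinuousLinearMap.mul ℝ ℝ) hφcont hu_loc
    convert this using 1
    exact funext fun x => convolution_mul_swap.symm
  · rw [dist_eq, ← integral_sub (integrable_kernel_mul hJ hu hB x)
      (integrable_kernel_mul hφint hu hB x)]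
    calc |∫ y, J (x - y) * u y - φ (x - y) * u y|
        = |∫ y, (J - φ) (x - y) * u y| := by simp only [Pi.sub_apply, sub_mul]
      _ ≤ (∫ z, |(J - φ) z|) * B := abs_integral_kernel_mul_le (hJ.sub hφint) hB x
      _ ≤ ε / (2 * (B + 1)) * B := by gcongr; simpa using hφ
      _ < ε := by
        rw [div_mul_eq_mul_div, div_lt_iff₀ (by positivity)]
        nlinarith

theorem ae_eq_zero_of_integral_kernel_mul_eq_zero (hJ0 : ∀ z, 0 ≤ J z) (hu : ∀ᵐ y, u y ≤ 0)
    {x p δ : ℝ} (hint : Integrable fun y => J (x - y) * u y) (hx : ∫ y, J (x - y) * u y = 0)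
    (hJp : ∀ t ∈ ball p δ, 0 < J t) : ∀ᵐ y, y ∈ ball (x - p) δ → u y = 0 := by
  have hnonneg : 0 ≤ᵐ[volume] fun y => -(J (x - y) * u y) := by
    filter_upwards [hu] with y hy
    exact neg_nonneg.2 (mul_nonpos_of_nonneg_of_nonpos (hJ0 _) hy)
  have hzero := (integral_eq_zero_iff_of_nonneg_ae hnonneg hint.neg).1
    (by rw [integral_neg, hx, neg_zero])
  filter_upwards [hzero] with y hy hmem
  have hJy : 0 < J (x - y) := hJp _ <| by
    rw [mem_ball, dist_eq] at hmem ⊢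
    rwa [show x - y - p = -(y - (x - p)) by ring, abs_neg]
  exact (mul_eq_zero.1 (neg_eq_zero.1 hy)).resolve_left hJy.ne'

theorem integral_kernel_mul_nonpos (hJ0 : ∀ z, 0 ≤ J z) (hu : ∀ᵐ y, u y ≤ 0) (x : ℝ) :
    ∫ y, J (x - y) * u y ≤ 0 :=
  integral_nonpos_of_ae <| by
    filter_upwards [hu] with y hy using mul_nonpos_of_nonneg_of_nonpos (hJ0 _) hy

theorem ball_neg_subset_shiftSubmonoid {c : ℝ → ℝ} {p δ : ℝ} (hJ : Integrable J)
    (hJ0 : ∀ z, 0 ≤ J z) (hJp : ∀ t ∈ ball p δ, 0 < J t) (hu : AEStronglyMeasurable u)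
    (hB : ∀ y, |u y| ≤ B) (hneg : ∀ᵐ y, u y ≤ 0)
    (hineq : ∀ᵐ x, 0 ≤ (∫ y, J (x - y) * u y) - u x + c x * u x) :
    ball (-p) δ ⊆ shiftSubmonoid {x | ∫ y, J (x - y) * u y = 0} := by
  intro s hs x hx
  refine eqOn_zero_of_ae_nonneg (μ := volume) (continuous_integral_kernel_mul hJ hu hB)
    (integral_kernel_mul_nonpos hJ0 hneg) isOpen_ball ?_
    (by rwa [mem_ball, dist_eq, show x + s - (x - p) = s - -p by ring, ← dist_eq])
  -- Where `u` vanishes a.e., the inequality reads `0 ≤ ∫ J (x - y) u y dy`.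
  filter_upwards [ae_eq_zero_of_integral_kernel_mul_eq_zero hJ0 hneg
    (integrable_kernel_mul hJ hu hB x) hx hJp, hineq] with y hy hy' hmem
  simpa [hy hmem] using hy'

end KernelIntegral

theorem stmt10 (J c u : ℝ → ℝ)
    (hJc : Continuous J) (hJ0 : ∀ z, 0 ≤ J z) (hJ1 : ∫ z, J z = 1)
    (hMP : ∃ a b : ℝ, a < 0 ∧ 0 < b ∧ 0 < J a ∧ 0 < J b)
    (hcb : ∃ A, ∀ x, |c x| ≤ A)
    (hum : Measurable u) (hub : ∃ A, ∀ x, |u x| ≤ A)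
    (hneg : ∀ᵐ x, u x ≤ 0)
    (hineq : ∀ᵐ x, 0 ≤ (∫ y, J (x - y) * u y) - u x + c x * u x) :
    (∀ K : Set ℝ, IsCompact K → ∃ ε > 0, ∀ᵐ x ∂(volume.restrict K), u x ≤ -ε) ∨
      (∀ᵐ x, u x = 0) := by
  obtain ⟨a, b, ha, hb, hJa, hJb⟩ := hMP
  obtain ⟨A, hA⟩ := hcb
  obtain ⟨B, hB⟩ := hub
  have hJ : Integrable J := integrable_of_integral_eq_one hJ1
  have hu : AEStronglyMeasurable u := hum.aestronglyMeasurable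
  have hJpos : IsOpen {t | 0 < J t} := isOpen_lt continuous_const hJc
  obtain ⟨δa, hδa, hJa'⟩ := Metric.isOpen_iff.1 hJpos a hJa
  obtain ⟨δb, hδb, hJb'⟩ := Metric.isOpen_iff.1 hJpos b hJb
  by_cases hzero : ∃ x₀, ∫ y, J (x₀ - y) * u y = 0
  · right
    have hall := eq_univ_of_shiftSubmonoid_eq_top (AddSubmonoid.eq_top_of_ball_subset
      (neg_pos.2 ha) (neg_neg_iff_pos.2 hb) hδa hδb
      (ball_neg_subset_shiftSubmonoid hJ hJ0 hJa' hu hB hneg hineq)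
      (ball_neg_subset_shiftSubmonoid hJ hJ0 hJb' hu hB hneg hineq)) hzero
    refine ae_of_forall_nhds_ae fun x => ⟨ball x δa, ball_mem_nhds x hδa, ?_⟩
    have hx : x + a ∈ {x | ∫ y, J (x - y) * u y = 0} := hall ▸ mem_univ _
    have := ae_eq_zero_of_integral_kernel_mul_eq_zero hJ0 hneg (integrable_kernel_mul hJ hu hB _)
      hx hJa'
    rwa [add_sub_cancel_right] at this
  · left
    have hkey : ∀ᵐ x, (1 + A) * u x ≤ ∫ y, J (x - y) * u y := by
      filter_upwards [hneg, hineq] with x h1 h2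
      nlinarith [abs_le.1 (hA x)]
    have hA0 : 0 ≤ A := (abs_nonneg _).trans (hA 0)
    exact fun K hK => exists_pos_ae_restrict_le_neg (continuous_integral_kernel_mul hJ hu hB)
      (fun x => (integral_kernel_mul_nonpos hJ0 hneg x).lt_of_ne (not_exists.1 hzero x))
      (by linarith) hkey hK
end

section
/- Let f be an ignition nonlinearity: f ∈ C¹([0,1]) with f ≡ 0 on [0,ρ], f > 0 on (ρ,1), f(1)=0, for some ρ ∈ (0,1). Let J satisfy (j1). If u is a monotone travelling front of J⋆u - u - cu' + f(u) = 0 with u(-∞)=0, u(+∞)=1, then μ c² - ν|c| ≤ 0, where μ = min(ρ, 1-ρ) and ν = ∫_ℝ J(z)|z| dz. In particular |c| ≤ ν/μ. -/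
open MeasureTheory Real Filter Topology

/-! Write the equation as `c u' = K + f(u)` with `K = J ⋆ u - u`. By Fubini, `∫ₐᵇ |K| ≤ ν` on every
interval, because `∫ₐᵇ |u(x - z) - u(x)| dx ≤ |z|` for a monotone `u` with values in `[0, 1]`.
Let `u(x₀) = ρ`. Left of `x₀` the reaction term vanishes, so integrating from `-∞` to `x₀` gives
`c ρ ≤ ν`; right of `x₀` it is nonnegative, so integrating from `x₀` to `+∞` gives
`-c (1 - ρ) ≤ ν`. Hence `min(ρ, 1 - ρ) |c| ≤ ν`. -/

theorem Monotone.intervalIntegral_abs_comp_sub_sub_le {u : ℝ → ℝ} (hu : Monotone u)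
    (h0 : ∀ x, 0 ≤ u x) (h1 : ∀ x, u x ≤ 1) (z : ℝ) {a b : ℝ} (hab : a ≤ b) :
    ∫ x in a..b, |u (x - z) - u x| ≤ |z| := by
  wlog hz : 0 ≤ z generalizing z a b with H
  · calc ∫ x in a..b, |u (x - z) - u x|
        = ∫ x in (a - z)..(b - z), |u (x - -z) - u x| := by
          rw [← intervalIntegral.integral_comp_sub_right]
          simp only [sub_neg_eq_add, sub_add_cancel, abs_sub_comm]
      _ ≤ |-z| := H (-z) (by linarith) (by linarith)
      _ = |z| := abs_neg z
  have hint : ∀ p q, IntervalIntegrable u volume p q := fun p q => hu.intervalIntegrable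
  have hshift : IntervalIntegrable (fun x => u (x - z)) volume a b :=
    (hu.comp fun x y (h : x ≤ y) => sub_le_sub_right h z).intervalIntegrable
  have hwindow_le : ∫ x in (b - z)..b, u x ≤ z := by
    have := intervalIntegral.norm_integral_le_of_norm_le_const (a := b - z) (b := b) (C := 1)
      (f := u) fun x _ => by rw [Real.norm_eq_abs, abs_of_nonneg (h0 x)]; exact h1 x
    rw [Real.norm_eq_abs, sub_sub_cancel, one_mul, abs_of_nonneg hz] at this
    linarith [le_abs_self (∫ x in (b - z)..b, u x)]
  have hwindow_nonneg : 0 ≤ ∫ x in (a - z)..a, u x :=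
    intervalIntegral.integral_nonneg (by linarith) fun x _ => h0 x
  calc ∫ x in a..b, |u (x - z) - u x| = ∫ x in a..b, (u x - u (x - z)) :=
        intervalIntegral.integral_congr fun x _ =>
          abs_sub_comm (u x) _ ▸ abs_of_nonneg (sub_nonneg.2 (hu (by linarith)))
    _ = (∫ x in (b - z)..b, u x) - ∫ x in (a - z)..a, u x := by
        rw [intervalIntegral.integral_sub (hint a b) hshift,
          intervalIntegral.integral_comp_sub_right,
          intervalIntegral.integral_interval_sub_interval_comm (hint a b) (hint _ _) (hint _ _),
          intervalIntegral.integral_symm a, intervalIntegral.integral_symm b]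
        ring
    _ ≤ |z| := by rw [abs_of_nonneg hz]; linarith

noncomputable def nonlocalLaplacian (J u : ℝ → ℝ) (x : ℝ) : ℝ := ∫ z, J z * (u (x - z) - u x)

section

variable {J u : ℝ → ℝ}

theorem abs_sub_le_one_of_nonneg_of_le_one (h0 : ∀ x, 0 ≤ u x) (h1 : ∀ x, u x ≤ 1) (x y : ℝ) :
    |u y - u x| ≤ 1 :=
  abs_sub_le_iff.2 ⟨by linarith [h0 x, h1 y], by linarith [h0 y, h1 x]⟩

theorem integrable_prod_mul_comp_sub_sub (hJ : Integrable J) (hu : Measurable u)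
    (h0 : ∀ x, 0 ≤ u x) (h1 : ∀ x, u x ≤ 1) {s : Set ℝ} (hs : volume s ≠ ⊤) :
    Integrable (Function.uncurry fun x z => J z * (u (x - z) - u x))
      ((volume.restrict s).prod volume) := by
  have hJsnd : Integrable (fun p : ℝ × ℝ => J p.2) ((volume.restrict s).prod volume) := by
    simpa using (integrableOn_const (C := (1 : ℝ)) hs).mul_prod hJ
  have hdiff : Measurable fun p : ℝ × ℝ => u (p.1 - p.2) - u p.1 :=
    (hu.comp (measurable_fst.sub measurable_snd)).sub (hu.comp measurable_fst)
  exact hJsnd.mul_bdd (c := 1) hdiff.aestronglyMeasurable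
    (ae_of_all _ fun p => abs_sub_le_one_of_nonneg_of_le_one h0 h1 p.1 (p.1 - p.2))

theorem convolution_sub_eq_nonlocalLaplacian (hJ : Integrable J) (hJ1 : ∫ z, J z = 1)
    (hu : Measurable u) (h0 : ∀ x, 0 ≤ u x) (h1 : ∀ x, u x ≤ 1) (x : ℝ) :
    (∫ y, J (x - y) * u y) - u x = nonlocalLaplacian J u x := by
  have hconv : ∫ y, J (x - y) * u y = ∫ z, J z * u (x - z) := by
    simpa only [sub_sub_cancel] using
      (integral_sub_left_eq_self (fun y => J (x - y) * u y) volume x).symm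
  have hJu : Integrable (fun z => J z * u (x - z)) :=
    hJ.mul_bdd (hu.comp (measurable_const.sub measurable_id)).aestronglyMeasurable (c := 1)
      (ae_of_all _ fun z => by rw [Real.norm_eq_abs, abs_of_nonneg (h0 _)]; exact h1 _)
  simp only [nonlocalLaplacian, mul_sub]
  rw [integral_sub hJu (hJ.mul_const _), integral_mul_const, hJ1, one_mul, hconv]

theorem intervalIntegrable_nonlocalLaplacian (hJ : Integrable J) (hu : Measurable u)
    (h0 : ∀ x, 0 ≤ u x) (h1 : ∀ x, u x ≤ 1) (a b : ℝ) :
    IntervalIntegrable (nonlocalLaplacian J u) volume a b :=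
  ⟨(integrable_prod_mul_comp_sub_sub hJ hu h0 h1 measure_Ioc_lt_top.ne).integral_prod_left,
    (integrable_prod_mul_comp_sub_sub hJ hu h0 h1 measure_Ioc_lt_top.ne).integral_prod_left⟩

theorem Monotone.abs_intervalIntegral_nonlocalLaplacian_le (hu : Monotone u)
    (h0 : ∀ x, 0 ≤ u x) (h1 : ∀ x, u x ≤ 1) (hJ0 : ∀ z, 0 ≤ J z) (hJ : Integrable J)
    (hJmom : Integrable fun z => |z| * J z) {a b : ℝ} (hab : a ≤ b) :
    |∫ x in a..b, nonlocalLaplacian J u x| ≤ ∫ z, |z| * J z := by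
  have hprod : Integrable (Function.uncurry fun x z => |J z * (u (x - z) - u x)|)
      ((volume.restrict (Set.Ioc a b)).prod volume) :=
    (integrable_prod_mul_comp_sub_sub hJ hu.measurable h0 h1 measure_Ioc_lt_top.ne).abs
  calc |∫ x in a..b, nonlocalLaplacian J u x|
      ≤ ∫ x in Set.Ioc a b, |nonlocalLaplacian J u x| := by
        rw [intervalIntegral.integral_of_le hab]; exact abs_integral_le_integral_abs
    _ ≤ ∫ x in Set.Ioc a b, ∫ z, |J z * (u (x - z) - u x)| :=
        integral_mono (intervalIntegrable_nonlocalLaplacian hJ hu.measurable h0 h1 a b).1.abs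
          hprod.integral_prod_left fun x => abs_integral_le_integral_abs
    _ = ∫ z, ∫ x in Set.Ioc a b, |J z * (u (x - z) - u x)| := integral_integral_swap hprod
    _ ≤ ∫ z, |z| * J z := by
        refine integral_mono_of_nonneg (ae_of_all _ fun z => integral_nonneg fun x => abs_nonneg _)
          hJmom (ae_of_all _ fun z => ?_)
        simp only [abs_mul, abs_of_nonneg (hJ0 z)]
        rw [integral_const_mul, ← intervalIntegral.integral_of_le hab, mul_comm |z|]
        exact mul_le_mul_of_nonneg_left
          (hu.intervalIntegral_abs_comp_sub_sub_le h0 h1 z hab) (hJ0 z)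

end

theorem Monotone.integral_deriv_eq_sub {u : ℝ → ℝ} (hu : Monotone u) (hud : Differentiable ℝ u)
    (a b : ℝ) : ∫ x in a..b, deriv u x = u b - u a :=
  intervalIntegral.integral_deriv_eq_sub (fun x _ => hud x)
    (hu.monotoneOn _).intervalIntegrable_deriv

section

variable {u K : ℝ → ℝ} {c ν l x₀ : ℝ}

theorem Monotone.mul_sub_le_of_tendsto_atBot (hu : Monotone u) (hud : Differentiable ℝ u)
    (hK : ∀ a b, a ≤ b → |∫ x in a..b, K x| ≤ ν) (hcK : ∀ x ≤ x₀, c * deriv u x = K x)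
    (hl : Tendsto u atBot (𝓝 l)) : c * (u x₀ - l) ≤ ν := by
  have hbound : ∀ a ≤ x₀, c * (u x₀ - u a) ≤ ν := fun a ha =>
    calc c * (u x₀ - u a) = ∫ x in a..x₀, K x := by
          rw [← hu.integral_deriv_eq_sub hud, ← intervalIntegral.integral_const_mul]
          refine intervalIntegral.integral_congr fun x hx => hcK x ?_
          exact (Set.uIcc_of_le ha ▸ hx).2
      _ ≤ ν := (le_abs_self _).trans (hK a x₀ ha)
  exact _root_.le_of_tendsto ((tendsto_const_nhds.sub hl).const_mul c)
    (eventually_atBot.2 ⟨x₀, hbound⟩)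

theorem Monotone.neg_le_mul_sub_of_tendsto_atTop (hu : Monotone u) (hud : Differentiable ℝ u)
    (hK : ∀ a b, a ≤ b → |∫ x in a..b, K x| ≤ ν) (hKint : ∀ a b, IntervalIntegrable K volume a b)
    (hcK : ∀ x, x₀ ≤ x → K x ≤ c * deriv u x) (hl : Tendsto u atTop (𝓝 l)) :
    -ν ≤ c * (l - u x₀) := by
  have hbound : ∀ b ≥ x₀, -ν ≤ c * (u b - u x₀) := fun b hb =>
    calc -ν ≤ ∫ x in x₀..b, K x := neg_le_of_abs_le (hK x₀ b hb)
      _ ≤ ∫ x in x₀..b, c * deriv u x :=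
          intervalIntegral.integral_mono_on hb (hKint x₀ b)
            ((hu.monotoneOn _).intervalIntegrable_deriv.const_mul c) fun x hx => hcK x hx.1
      _ = c * (u b - u x₀) := by
          rw [intervalIntegral.integral_const_mul, hu.integral_deriv_eq_sub hud]
  exact _root_.ge_of_tendsto ((hl.sub_const _).const_mul c) (eventually_atTop.2 ⟨x₀, hbound⟩)

end

theorem stmt11_general (J f u : ℝ → ℝ) (c ρ : ℝ) (hρ : ρ ∈ Set.Ioo (0:ℝ) 1)
    (hJ0 : ∀ z, 0 ≤ J z)
    (hJint : Integrable J) (hJ1 : ∫ z, J z = 1)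
    (hJmom : Integrable (fun z => |z| * J z))
    (hfig : ∀ s ∈ Set.Icc (0:ℝ) ρ, f s = 0)
    (hfpos : ∀ s ∈ Set.Ioo ρ 1, 0 < f s) (hf1 : f 1 = 0)
    (hmono : Monotone u) (hud : Differentiable ℝ u)
    (heq : ∀ x, (∫ y, J (x - y) * u y) - u x - c * deriv u x + f (u x) = 0)
    (hlm : Tendsto u atBot (nhds 0)) (hlp : Tendsto u atTop (nhds 1)) :
    min ρ (1 - ρ) * c ^ 2 - (∫ z, |z| * J z) * |c| ≤ 0 := by
  have h0 : ∀ x, 0 ≤ u x := hmono.le_of_tendsto hlm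
  have h1 : ∀ x, u x ≤ 1 := hmono.ge_of_tendsto hlp
  obtain ⟨x₀, hx₀⟩ : ρ ∈ Set.range u := mem_range_of_exists_le_of_exists_ge hud.continuous
    (hlm.eventually (ge_mem_nhds hρ.1)).exists (hlp.eventually (le_mem_nhds hρ.2)).exists
  have hf_nonneg : ∀ s ∈ Set.Icc ρ 1, 0 ≤ f s := by
    rintro s ⟨hρs, hs1⟩
    rcases hρs.eq_or_lt with hρs | hρs
    · exact (hfig s ⟨hρ.1.le.trans hρs.le, hρs.ge⟩).ge
    rcases hs1.eq_or_lt with hs1 | hs1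
    · exact hs1 ▸ hf1.ge
    exact (hfpos s ⟨hρs, hs1⟩).le
  have hcu : ∀ x, c * deriv u x = nonlocalLaplacian J u x + f (u x) := fun x => by
    linarith [heq x, convolution_sub_eq_nonlocalLaplacian hJint hJ1 hmono.measurable h0 h1 x]
  have hK := fun a b (hab : a ≤ b) =>
    hmono.abs_intervalIntegral_nonlocalLaplacian_le h0 h1 hJ0 hJint hJmom hab
  have hleft := hmono.mul_sub_le_of_tendsto_atBot hud hK (x₀ := x₀) (fun x hx => by
    rw [hcu, hfig _ ⟨h0 x, hx₀ ▸ hmono hx⟩, add_zero]) hlm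
  have hright := hmono.neg_le_mul_sub_of_tendsto_atTop hud hK
    (intervalIntegrable_nonlocalLaplacian hJint hmono.measurable h0 h1) (x₀ := x₀)
    (fun x hx => by rw [hcu]; exact le_add_of_nonneg_right (hf_nonneg _ ⟨hx₀ ▸ hmono hx, h1 x⟩)) hlp
  rw [hx₀, sub_zero] at hleft
  rw [hx₀] at hright
  rcases le_total 0 c with hc | hc
  · rw [abs_of_nonneg hc]
    nlinarith [mul_le_mul_of_nonneg_right (min_le_left ρ (1 - ρ)) hc]
  · rw [abs_of_nonpos hc]
    nlinarith [mul_le_mul_of_nonneg_right (min_le_right ρ (1 - ρ)) (neg_nonneg.2 hc)]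

theorem stmt11 (J f u : ℝ → ℝ) (c ρ : ℝ) (hρ : ρ ∈ Set.Ioo (0:ℝ) 1)
    (hJc : Continuous J) (hJ0 : ∀ z, 0 ≤ J z)
    (hJint : Integrable J) (hJ1 : ∫ z, J z = 1)
    (hJmom : Integrable (fun z => |z| * J z))
    (hf : ContDiffOn ℝ 1 f (Set.Icc 0 1))
    (hfig : ∀ s ∈ Set.Icc (0:ℝ) ρ, f s = 0)
    (hfpos : ∀ s ∈ Set.Ioo ρ 1, 0 < f s) (hf1 : f 1 = 0)
    (hmono : Monotone u) (hud : Differentiable ℝ u)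
    (heq : ∀ x, (∫ y, J (x - y) * u y) - u x - c * deriv u x + f (u x) = 0)
    (hlm : Tendsto u atBot (nhds 0)) (hlp : Tendsto u atTop (nhds 1)) :
    min ρ (1 - ρ) * c ^ 2 - (∫ z, |z| * J z) * |c| ≤ 0 :=
  stmt11_general J f u c ρ hρ hJ0 hJint hJ1 hJmom hfig hfpos hf1 hmono hud heq hlm hlp
end

section
/- Let J satisfy (j1) and suppose ∫_ℝ J(-x) e^{λ₀ x} dx < ∞ for some λ₀ > 0. Let f be C¹ with f(0)=0, f'(0) > 0. Define m(λ) = ∫_ℝ J(-x) e^{λx} dx + f'(0) - 1 and c¹ = inf_{λ>0} m(λ)/λ. If J is symmetric (J(x) = J(-x)), then c¹ > 0. -/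
/-!
By symmetry of `J`, `∫ J(-x) e^{λx} dx = ∫ J(x) cosh(λx) dx`. Since `cosh s ≥ max 1 |s|`, for
`t = min (f'(0)) 1` we get `∫ J(x) cosh(λx) dx ≥ (1 - t) + t λ M` with `M = ∫ |x| J(x) dx`, which is
positive because `∫ J = 1`. Hence `m(λ) ≥ (f'(0) - t) + t λ M ≥ t λ M`, so `m(λ)/λ ≥ t M > 0` for
every `λ > 0`.
-/

open MeasureTheory Real Filter

lemma abs_le_cosh (x : ℝ) : |x| ≤ cosh x := by
  rw [← cosh_abs]
  exact (self_le_sinh_iff.2 (abs_nonneg x)).trans (sinh_lt_cosh _).le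

lemma one_sub_add_mul_abs_le_cosh {t : ℝ} (ht₀ : 0 ≤ t) (ht₁ : t ≤ 1) (x : ℝ) :
    1 - t + t * |x| ≤ cosh x := by
  nlinarith [one_le_cosh x, abs_le_cosh x]

lemma integral_abs_mul_pos {J : ℝ → ℝ} (hJ0 : ∀ x, 0 ≤ J x)
    (hJmom : Integrable (fun x => |x| * J x)) (hJ : ∫ x, J x ≠ 0) :
    0 < ∫ x, |x| * J x := by
  refine (integral_nonneg fun x => mul_nonneg (abs_nonneg x) (hJ0 x)).lt_of_ne' fun hzero => hJ ?_
  have hmom_ae : (fun x => |x| * J x) =ᵐ[volume] 0 :=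
    (integral_eq_zero_iff_of_nonneg (fun x => mul_nonneg (abs_nonneg x) (hJ0 x)) hJmom).1 hzero
  have hJ_ae : J =ᵐ[volume] 0 := by
    filter_upwards [hmom_ae, compl_mem_ae_iff.2 (volume_singleton (a := (0 : ℝ)))]
      with x hx hx0
    exact (mul_eq_zero.1 hx).resolve_left (abs_ne_zero.2 hx0)
  simp [integral_congr_ae hJ_ae]

section Symmetric

variable {J : ℝ → ℝ} {lam : ℝ}

lemma mul_cosh_eq_of_symm (hsymm : ∀ x, J x = J (-x)) (x : ℝ) :
    J x * cosh (lam * x) = (J (-x) * exp (lam * x) + J (-(-x)) * exp (lam * -x)) / 2 := by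
  rw [cosh_eq, neg_neg, ← hsymm, mul_neg]
  ring

lemma integrable_mul_cosh_of_symm (hsymm : ∀ x, J x = J (-x))
    (hint : Integrable (fun x => J (-x) * exp (lam * x))) :
    Integrable (fun x => J x * cosh (lam * x)) := by
  simp_rw [mul_cosh_eq_of_symm hsymm]
  exact (hint.add hint.comp_neg).div_const 2

lemma integral_comp_neg_mul_exp_of_symm (hsymm : ∀ x, J x = J (-x))
    (hint : Integrable (fun x => J (-x) * exp (lam * x))) :
    ∫ x, J (-x) * exp (lam * x) = ∫ x, J x * cosh (lam * x) := by
  simp_rw [mul_cosh_eq_of_symm hsymm]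
  rw [integral_div, integral_add hint hint.comp_neg,
    integral_neg_eq_self (fun x => J (-x) * exp (lam * x))]
  ring

end Symmetric

lemma le_integral_mul_cosh {J : ℝ → ℝ} {lam t : ℝ} (hJ0 : ∀ x, 0 ≤ J x) (hJint : Integrable J)
    (hJmom : Integrable (fun x => |x| * J x))
    (hcosh : Integrable (fun x => J x * cosh (lam * x))) (hlam : 0 ≤ lam)
    (ht₀ : 0 ≤ t) (ht₁ : t ≤ 1) :
    (1 - t) * (∫ x, J x) + t * lam * ∫ x, |x| * J x ≤ ∫ x, J x * cosh (lam * x) := by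
  rw [← integral_const_mul, ← integral_const_mul,
    ← integral_add (hJint.const_mul _) (hJmom.const_mul _)]
  refine integral_mono ((hJint.const_mul _).add (hJmom.const_mul _)) hcosh fun x => ?_
  have hbound := one_sub_add_mul_abs_le_cosh ht₀ ht₁ (lam * x)
  rw [abs_mul, abs_of_nonneg hlam] at hbound
  have := mul_le_mul_of_nonneg_left hbound (hJ0 x)
  linarith

theorem stmt12_general (J f : ℝ → ℝ) (lam₀ : ℝ) (hlam₀ : 0 < lam₀)
    (hJ0 : ∀ z, 0 ≤ J z)
    (hJint : Integrable J) (hJ1 : ∫ z, J z = 1)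
    (hJmom : Integrable (fun z => |z| * J z))
    (hJexp : Integrable (fun x => J (-x) * Real.exp (lam₀ * x)))
    (hf0' : 0 < deriv f 0)
    (hsymm : ∀ x, J x = J (-x)) :
    0 < sInf {y : ℝ | ∃ lam > 0, Integrable (fun x => J (-x) * Real.exp (lam * x)) ∧
      y = ((∫ x, J (-x) * Real.exp (lam * x)) + deriv f 0 - 1) / lam} := by
  set t := min (deriv f 0) 1
  set M := ∫ x, |x| * J x
  have hM : 0 < M := integral_abs_mul_pos hJ0 hJmom (by rw [hJ1]; exact one_ne_zero)
  have ht : 0 < t := lt_min hf0' one_pos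
  refine (mul_pos ht hM).trans_le (le_csInf ⟨_, lam₀, hlam₀, hJexp, rfl⟩ ?_)
  rintro y ⟨lam, hlam, hint, rfl⟩
  have hlower := le_integral_mul_cosh hJ0 hJint hJmom (integrable_mul_cosh_of_symm hsymm hint) hlam.le
    ht.le (min_le_right _ _)
  rw [← integral_comp_neg_mul_exp_of_symm hsymm hint, hJ1] at hlower
  rw [le_div_iff₀ hlam]
  nlinarith [min_le_left (deriv f 0) 1]

theorem stmt12 (J f : ℝ → ℝ) (lam₀ : ℝ) (hlam₀ : 0 < lam₀)
    (hJc : Continuous J) (hJ0 : ∀ z, 0 ≤ J z)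
    (hJint : Integrable J) (hJ1 : ∫ z, J z = 1)
    (hJmom : Integrable (fun z => |z| * J z))
    (hJexp : Integrable (fun x => J (-x) * Real.exp (lam₀ * x)))
    (hf : ContDiff ℝ 1 f) (hf0 : f 0 = 0) (hf0' : 0 < deriv f 0)
    (hsymm : ∀ x, J x = J (-x)) :
    0 < sInf {y : ℝ | ∃ lam > 0, Integrable (fun x => J (-x) * Real.exp (lam * x)) ∧
      y = ((∫ x, J (-x) * Real.exp (lam * x)) + deriv f 0 - 1) / lam} :=
  stmt12_general J f lam₀ hlam₀ hJ0 hJint hJ1 hJmom hJexp hf0' hsymm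
end

section
/- Let J satisfy (j1) with J ∈ C¹ compactly supported, c ∈ ℝ, f'(0) ∈ ℝ. Let u : ℝ → [0,∞) be measurable with u(x) ≤ M e^{αx} for all x (some M, α > 0) and suppose u is integrable against e^{-λx} for 0 < λ < α. Define U(λ) = ∫_ℝ e^{-λx} u(x) dx and m(λ) = ∫_ℝ J(-x) e^{λx} dx + f'(0) - 1. If u is a C¹ solution of J⋆u - u - cu' + f(u) = 0 with u(-∞)=0 and u bounded, then for 0 < Re λ < α: U(λ)(-cλ + m(λ)) = ∫_ℝ e^{-λx}(f'(0)u(x) - f(u(x))) dx. -/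
/-!
Multiply the equation by `e^{-λx}` and integrate. Since `e^{-λx} = e^{-λ(x-y)} e^{-λy}`, the weighted
convolution term is the convolution of `z ↦ J z e^{-λz}` with `y ↦ e^{-λy} u y`, whose integral is
the product of the two integrals (Fubini). The derivative term integrates to `cλ U(λ)`: the weighted
function `e^{-λx} u x` and, by the equation, its derivative are both integrable, so the derivative has integral zero.
Finally `f(u)` is integrable against `e^{-λx}` because `|f y| ≤ K y` on the bounded range of `u`.
-/

open MeasureTheory Real Filter

section WeightedConvolution

variable {J u : ℝ → ℝ} {lam : ℝ}

theorem exp_mul_integral_conv_eq_convolution (x : ℝ) :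
    convolution (fun z => J z * exp (-lam * z))
        (fun y => exp (-lam * y) * u y) (ContinuousLinearMap.mul ℝ ℝ) volume x =
      exp (-lam * x) * ∫ y, J (x - y) * u y := by
  have hexp : ∀ t, exp (-lam * t) * exp (-lam * (x - t)) = exp (-lam * x) := fun t => by
    rw [← exp_add]; ring_nf
  calc _ = ∫ t, exp (-lam * x) * (J (x - (x - t)) * u (x - t)) := by
        rw [convolution_def]
        congr 1 with t
        rw [ContinuousLinearMap.mul_apply', sub_sub_cancel, ← hexp t]
        ring
    _ = exp (-lam * x) * ∫ y, J (x - y) * u y := by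
        rw [integral_const_mul, integral_sub_left_eq_self (fun y => J (x - y) * u y) volume x]

variable (hJ : Integrable fun z => J z * exp (-lam * z))
  (hu : Integrable fun x => exp (-lam * x) * u x)
include hJ hu

theorem integrable_exp_mul_integral_conv :
    Integrable fun x => exp (-lam * x) * ∫ y, J (x - y) * u y :=
  (hJ.integrable_convolution _ hu).congr
    (ae_of_all _ exp_mul_integral_conv_eq_convolution)

theorem integral_exp_mul_integral_conv :
    ∫ x, exp (-lam * x) * ∫ y, J (x - y) * u y =
      (∫ x, J (-x) * exp (lam * x)) * ∫ x, exp (-lam * x) * u x := by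
  have hreflect : ∫ x, J (-x) * exp (lam * x) = ∫ z, J z * exp (-lam * z) := by
    rw [← integral_neg_eq_self (fun z => J z * exp (-lam * z))]
    simp only [neg_mul, mul_neg, neg_neg]
  simp_rw [← exp_mul_integral_conv_eq_convolution]
  rw [integral_convolution (L := ContinuousLinearMap.mul ℝ ℝ) hJ hu,
    ContinuousLinearMap.mul_apply', hreflect]

end WeightedConvolution

theorem integral_exp_mul_deriv {v v' : ℝ → ℝ} {lam : ℝ} (hv : ∀ x, HasDerivAt v (v' x) x)
    (hint : Integrable fun x => exp (-lam * x) * v x)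
    (hint' : Integrable fun x => exp (-lam * x) * v' x) :
    ∫ x, exp (-lam * x) * v' x = lam * ∫ x, exp (-lam * x) * v x := by
  have hderiv : ∀ x, HasDerivAt (fun x => exp (-lam * x) * v x)
      (exp (-lam * x) * v' x - lam * (exp (-lam * x) * v x)) x := fun x =>
    ((((hasDerivAt_id' x).const_mul (-lam)).exp).mul (hv x)).congr_deriv (by ring)
  have hzero := integral_eq_zero_of_hasDerivAt_of_integrable hderiv
    (hint'.sub (hint.const_mul lam)) hint
  rwa [integral_sub hint' (hint.const_mul lam), integral_const_mul, sub_eq_zero] at hzero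

theorem exists_abs_le_mul_of_contDiff {f : ℝ → ℝ} (hf : ContDiff ℝ 1 f) (hf0 : f 0 = 0)
    {C : ℝ} (hC : 0 ≤ C) : ∃ K, ∀ y ∈ Set.Icc 0 C, |f y| ≤ K * y := by
  obtain ⟨K, hK⟩ := isCompact_Icc.exists_bound_of_continuousOn
    (hf.continuous_deriv le_rfl).continuousOn (s := Set.Icc 0 C)
  refine ⟨K, fun y hy => ?_⟩
  have h := (convex_Icc 0 C).norm_image_sub_le_of_norm_deriv_le
    (fun z _ => (hf.differentiable one_ne_zero).differentiableAt) hK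
    (Set.left_mem_Icc.mpr hC) hy
  simpa [hf0, Real.norm_eq_abs, abs_of_nonneg hy.1] using h

theorem integrable_exp_mul_comp_of_abs_le {f u : ℝ → ℝ} {lam K : ℝ} (hf : Continuous f)
    (hu : Continuous u) (hK : ∀ x, |f (u x)| ≤ K * u x)
    (hint : Integrable fun x => exp (-lam * x) * u x) :
    Integrable fun x => exp (-lam * x) * f (u x) := by
  refine (hint.const_mul K).mono' (by fun_prop) (ae_of_all _ fun x => ?_)
  rw [Real.norm_eq_abs, abs_mul, abs_of_pos (exp_pos _), mul_left_comm]
  exact mul_le_mul_of_nonneg_left (hK x) (exp_pos _).le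

theorem stmt13_general (J f u : ℝ → ℝ) (c α : ℝ)
    (hJc : Continuous J) (hJcs : HasCompactSupport J)
    (hf : ContDiff ℝ 1 f) (hf0 : f 0 = 0)
    (hu0 : ∀ x, 0 ≤ u x) (hub : ∃ C, ∀ x, u x ≤ C)
    (huint : ∀ lam : ℝ, 0 < lam → lam < α →
      Integrable (fun x => Real.exp (-lam * x) * u x))
    (huC1 : ContDiff ℝ 1 u)
    (heq : ∀ x, (∫ y, J (x - y) * u y) - u x - c * deriv u x + f (u x) = 0) :
    ∀ lam : ℝ, 0 < lam → lam < α →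
      (∫ x, Real.exp (-lam * x) * u x) *
          (-(c * lam) + ((∫ x, J (-x) * Real.exp (lam * x)) + deriv f 0 - 1)) =
        ∫ x, Real.exp (-lam * x) * (deriv f 0 * u x - f (u x)) := by
  intro lam hl1 hl2
  have hU := huint lam hl1 hl2
  have hJw : Integrable fun z => J z * exp (-lam * z) :=
    (hJc.mul (by fun_prop)).integrable_of_hasCompactSupport hJcs.mul_right
  have hconv := integrable_exp_mul_integral_conv hJw hU
  obtain ⟨C, hC⟩ := hub
  obtain ⟨K, hK⟩ := exists_abs_le_mul_of_contDiff hf hf0 ((hu0 0).trans (hC 0))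
  have hfu := integrable_exp_mul_comp_of_abs_le hf.continuous huC1.continuous
    (fun x => hK _ ⟨hu0 x, hC x⟩) hU
  have hcu' : Integrable fun x => exp (-lam * x) * (c * deriv u x) :=
    ((hconv.sub hU).add hfu).congr (ae_of_all _ fun x => by
      simp only [Pi.add_apply, Pi.sub_apply]; linear_combination exp (-lam * x) * heq x)
  have hIBP : ∫ x, exp (-lam * x) * (c * deriv u x) = c * lam * ∫ x, exp (-lam * x) * u x := by
    rw [integral_exp_mul_deriv (v := fun x => c * u x)
      (fun x => ((huC1.differentiable one_ne_zero x).hasDerivAt.const_mul c))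
      (hU.const_mul c |>.congr (ae_of_all _ fun x => by ring)) hcu']
    simp only [mul_left_comm _ c, integral_const_mul]; ring
  have hfu_eq : ∫ x, exp (-lam * x) * f (u x) = ∫ x, (exp (-lam * x) * (c * deriv u x) -
      exp (-lam * x) * (∫ y, J (x - y) * u y) + exp (-lam * x) * u x) :=
    integral_congr_ae (ae_of_all _ fun x => by linear_combination exp (-lam * x) * heq x)
  rw [show (fun x => exp (-lam * x) * (deriv f 0 * u x - f (u x))) =
      fun x => deriv f 0 * (exp (-lam * x) * u x) - exp (-lam * x) * f (u x) from
    funext fun x => by ring, integral_sub (hU.const_mul _) hfu, integral_const_mul, hfu_eq,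
    integral_add (f := fun x => exp (-lam * x) * (c * deriv u x) -
      exp (-lam * x) * ∫ y, J (x - y) * u y) (hcu'.sub hconv) hU, integral_sub hcu' hconv, hIBP,
    integral_exp_mul_integral_conv hJw hU]
  ring

theorem stmt13 (J f u : ℝ → ℝ) (c M α : ℝ) (hM : 0 < M) (hα : 0 < α)
    (hJc : Continuous J) (hJ0 : ∀ z, 0 ≤ J z)
    (hJint : Integrable J) (hJ1 : ∫ z, J z = 1)
    (hJmom : Integrable (fun z => |z| * J z))
    (hJC1 : ContDiff ℝ 1 J) (hJcs : HasCompactSupport J)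
    (hf : ContDiff ℝ 1 f) (hf0 : f 0 = 0)
    (hu0 : ∀ x, 0 ≤ u x) (hub : ∃ C, ∀ x, u x ≤ C)
    (huexp : ∀ x, u x ≤ M * Real.exp (α * x))
    (huint : ∀ lam : ℝ, 0 < lam → lam < α →
      Integrable (fun x => Real.exp (-lam * x) * u x))
    (huC1 : ContDiff ℝ 1 u)
    (heq : ∀ x, (∫ y, J (x - y) * u y) - u x - c * deriv u x + f (u x) = 0)
    (hlim : Tendsto u atBot (nhds 0)) :
    ∀ lam : ℝ, 0 < lam → lam < α →
      (∫ x, Real.exp (-lam * x) * u x) *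
          (-(c * lam) + ((∫ x, J (-x) * Real.exp (lam * x)) + deriv f 0 - 1)) =
        ∫ x, Real.exp (-lam * x) * (deriv f 0 * u x - f (u x)) :=
  stmt13_general J f u c α hJc hJcs hf hf0 hu0 hub huint huC1 heq
end

section
/- Let J satisfy (j1), (MP) (∃ a<0<b with J(a),J(b)>0), and let f be C¹ with f(0)=f(1)=0, f ≥ 0 on (0,1), f(γ)>0 for all γ ∈ (0,1). Suppose u : ℝ → [0,1] is continuous, solves J⋆u - u - cu' + f(u) = 0 (c ∈ ℝ; if c ≠ 0 assume u ∈ C¹), and lim_{x→+∞} u(x) = lim_{x→-∞} u(x) = 1. Then u ≡ 1. -/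
/-!
At a global minimum point `x₀` of `u` the drift term vanishes (`deriv u x₀ = 0` there, whether or not
`u` is differentiable at `x₀`) and `J ⋆ u ≥ u`, so the equation
forces `f (u x₀) ≤ 0`; as `u` is not `≡ 1`, its minimum is `< 1`, hence `u x₀ = 0`. There the equation
gives `(J ⋆ u) x₀ = 0`, so `u` vanishes at `x₀ - z` for any `z` with `J z > 0`. Taking such a `z ≠ 0`
(one exists because `∫ J = 1`) and iterating, `u` vanishes at the points `x₀ - n z`, which escape to
infinity, contradicting `u → 1` at `±∞`.
-/

open MeasureTheory Real Filter Topology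

theorem Continuous.eq_zero_of_integral_eq_zero {X : Type*} [TopologicalSpace X] [MeasurableSpace X]
    {μ : Measure X} [μ.IsOpenPosMeasure] {g : X → ℝ} (hg : Continuous g) (hg0 : 0 ≤ g)
    (hgi : Integrable g μ) (h : ∫ x, g x ∂μ = 0) : g = 0 :=
  (hg.ae_eq_iff_eq μ continuous_const).mp ((integral_eq_zero_iff_of_nonneg hg0 hgi).mp h)

theorem exists_ne_zero_pos_of_integral_ne_zero {J : ℝ → ℝ} (hJ0 : ∀ z, 0 ≤ J z)
    (hJ : ∫ z, J z ≠ 0) : ∃ z ≠ 0, 0 < J z := by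
  by_contra! h
  have hJae : J =ᵐ[volume] 0 := by
    refine measure_mono_null (fun z (hz : J z ≠ 0) => ?_) (measure_singleton (0 : ℝ))
    by_contra hz0
    exact hz (le_antisymm (h z hz0) (hJ0 z))
  exact hJ (by simp [integral_congr_ae hJae])

theorem IsMinOn.deriv_eq_zero {u : ℝ → ℝ} {x₀ : ℝ} (h : IsMinOn u Set.univ x₀) : deriv u x₀ = 0 :=
  (h.isLocalMin Filter.univ_mem).deriv_eq_zero

theorem eq_of_tendsto_cocompact_of_level_invariant {u : ℝ → ℝ} {L v z x₀ : ℝ}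
    (hu : Tendsto u (cocompact ℝ) (𝓝 L)) (hz : z ≠ 0)
    (hinv : ∀ x, u x = v → u (x - z) = v) (hx₀ : u x₀ = v) : v = L := by
  have hseq : ∀ n : ℕ, u (x₀ - n * z) = v := by
    intro n
    induction n with
    | zero => simpa using hx₀
    | succ n ih => simpa [add_mul, sub_sub] using hinv _ ih
  have hesc : Tendsto (fun n : ℕ => x₀ - n * z) atTop (cocompact ℝ) := by
    refine tendsto_cocompact_of_tendsto_dist_comp_atTop x₀ ?_
    simp only [Real.dist_eq, sub_sub_cancel_left, abs_neg, abs_mul, Nat.abs_cast]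
    exact tendsto_natCast_atTop_atTop.atTop_mul_const (abs_pos.mpr hz)
  have hconst : Tendsto (fun n : ℕ => u (x₀ - n * z)) atTop (𝓝 v) := by
    simp only [hseq, tendsto_const_nhds]
  exact tendsto_nhds_unique hconst (hu.comp hesc)

section NonlocalTerm

variable {J u : ℝ → ℝ}

theorem integrable_shift_mul (hJ : Integrable J) (hu : Continuous u)
    (hu01 : ∀ y, u y ∈ Set.Icc (0 : ℝ) 1) (x : ℝ) : Integrable fun y => J (x - y) * u y := by
  have hbdd : ∀ᵐ y ∂volume, ‖u y‖ ≤ 1 := Eventually.of_forall fun y => by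
    rw [Real.norm_eq_abs, abs_le]
    exact ⟨by linarith [(hu01 y).1], (hu01 y).2⟩
  simpa only [mul_comm] using (hJ.comp_sub_left x).bdd_mul hu.aestronglyMeasurable hbdd

theorem le_integral_shift_mul_of_isMinOn (hJ0 : ∀ z, 0 ≤ J z) (hJ : Integrable J)
    (hJ1 : ∫ z, J z = 1) (hu : Continuous u) (hu01 : ∀ y, u y ∈ Set.Icc (0 : ℝ) 1) {x₀ : ℝ}
    (hmin : IsMinOn u Set.univ x₀) : u x₀ ≤ ∫ y, J (x₀ - y) * u y :=
  calc u x₀ = ∫ y, J (x₀ - y) * u x₀ := by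
        rw [integral_mul_const, integral_sub_left_eq_self J volume x₀, hJ1, one_mul]
    _ ≤ ∫ y, J (x₀ - y) * u y :=
        integral_mono ((hJ.comp_sub_left x₀).mul_const _) (integrable_shift_mul hJ hu hu01 x₀)
          fun y => mul_le_mul_of_nonneg_left (hmin (Set.mem_univ y)) (hJ0 _)

theorem eq_zero_of_integral_shift_mul_eq_zero (hJc : Continuous J) (hJ0 : ∀ z, 0 ≤ J z)
    (hJ : Integrable J) (hu : Continuous u) (hu01 : ∀ y, u y ∈ Set.Icc (0 : ℝ) 1) {x z : ℝ}
    (hJz : 0 < J z) (h : ∫ y, J (x - y) * u y = 0) : u (x - z) = 0 := by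
  have hzero := (hJc.comp (continuous_sub_left x)).mul hu |>.eq_zero_of_integral_eq_zero
    (fun y => mul_nonneg (hJ0 _) (hu01 y).1) (integrable_shift_mul hJ hu hu01 x) h
  have := congrFun hzero (x - z)
  simp only [Pi.mul_apply, Function.comp_apply, sub_sub_cancel, Pi.zero_apply] at this
  exact (mul_eq_zero.mp this).resolve_left hJz.ne'

end NonlocalTerm

theorem stmt15_general (J f u : ℝ → ℝ) (c : ℝ)
    (hJc : Continuous J) (hJ0 : ∀ z, 0 ≤ J z)
    (hJint : Integrable J) (hJ1 : ∫ z, J z = 1)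
    (hf0 : f 0 = 0)
    (hfpos : ∀ γ ∈ Set.Ioo (0:ℝ) 1, 0 < f γ)
    (hucont : Continuous u) (hurange : ∀ x, u x ∈ Set.Icc (0:ℝ) 1)
    (heq : ∀ x, (∫ y, J (x - y) * u y) - u x - c * deriv u x + f (u x) = 0)
    (hlm : Tendsto u atBot (nhds 1)) (hlp : Tendsto u atTop (nhds 1)) :
    ∀ x, u x = 1 := by
  intro x
  by_contra hx
  have hu : Tendsto u (cocompact ℝ) (𝓝 1) := cocompact_eq_atBot_atTop (α := ℝ) ▸ hlm.sup hlp
  have hx1 : u x < 1 := lt_of_le_of_ne (hurange x).2 hx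
  obtain ⟨x₀, hle⟩ := hucont.exists_forall_le' x (hu.eventually (eventually_ge_nhds hx1))
  have hmin : IsMinOn u Set.univ x₀ := fun y _ => hle y
  have hbalance : (∫ y, J (x₀ - y) * u y) - u x₀ + f (u x₀) = 0 := by
    simpa [hmin.deriv_eq_zero] using heq x₀
  have hx₀ : u x₀ = 0 := by
    by_contra hne
    have := hfpos (u x₀) ⟨lt_of_le_of_ne (hurange x₀).1 (Ne.symm hne), (hmin trivial).trans_lt hx1⟩
    linarith [le_integral_shift_mul_of_isMinOn hJ0 hJint hJ1 hucont hurange hmin]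
  obtain ⟨z, hz, hJz⟩ := exists_ne_zero_pos_of_integral_ne_zero hJ0 (by simp [hJ1])
  have hinv : ∀ y, u y = 0 → u (y - z) = 0 := fun y hy => by
    have hminy : IsMinOn u Set.univ y := fun w _ => hy ▸ (hurange w).1
    have := heq y
    rw [hminy.deriv_eq_zero, hy, hf0] at this
    exact eq_zero_of_integral_shift_mul_eq_zero hJc hJ0 hJint hucont hurange hJz (by linarith)
  exact zero_ne_one (eq_of_tendsto_cocompact_of_level_invariant hu hz hinv hx₀)

theorem stmt15 (J f u : ℝ → ℝ) (c : ℝ)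
    (hJc : Continuous J) (hJ0 : ∀ z, 0 ≤ J z)
    (hJint : Integrable J) (hJ1 : ∫ z, J z = 1)
    (hJmom : Integrable (fun z => |z| * J z))
    (hMP : ∃ a b : ℝ, a < 0 ∧ 0 < b ∧ 0 < J a ∧ 0 < J b)
    (hf : ContDiff ℝ 1 f) (hf0 : f 0 = 0) (hf1 : f 1 = 0)
    (hfnn : ∀ s ∈ Set.Ioo (0:ℝ) 1, 0 ≤ f s)
    (hfpos : ∀ γ ∈ Set.Ioo (0:ℝ) 1, 0 < f γ)
    (hucont : Continuous u) (hurange : ∀ x, u x ∈ Set.Icc (0:ℝ) 1)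
    (huC1 : c ≠ 0 → ContDiff ℝ 1 u)
    (heq : ∀ x, (∫ y, J (x - y) * u y) - u x - c * deriv u x + f (u x) = 0)
    (hlm : Tendsto u atBot (nhds 1)) (hlp : Tendsto u atTop (nhds 1)) :
    ∀ x, u x = 1 :=
  stmt15_general J f u c hJc hJ0 hJint hJ1 hf0 hfpos hucont hurange heq hlm hlp
end

section
/- Let J satisfy (j1), let f be C¹ with f(0) = f(1) = 0, and suppose u : ℝ → [0,1] is a monotone bounded solution (in the distributional sense if c = 0) of εu'' + J⋆u - u - cu' + f(u) = 0 on ℝ for some ε ≥ 0, c ∈ ℝ. Then the limits l⁻ = lim_{x→-∞} u(x) and l⁺ = lim_{x→+∞} u(x) exist and satisfy f(l⁻) = f(l⁺) = 0. -/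
/-!
Along `l = atTop` or `atBot`, the equation says that the second derivative of
`F = ε u - c ∫₀ˣ u` is `u - f ∘ u - J ⋆ u`, which tends to `-f L` by dominated convergence.
By the mean value theorem the second difference `F (x + 2) - 2 F (x + 1) + F x` then also
tends to `-f L`; but the increments `F (x + 1) - F x = ε (u (x + 1) - u x) - c ∫ₓˣ⁺¹ u`
converge (to `-c L`), so the second difference tends to `0`.
-/

open MeasureTheory Real Filter Metric Set Topology

def IsShiftStable (l : Filter ℝ) : Prop :=
  ∀ r : ℝ, ∀ s ∈ l, ∀ᶠ x in l, closedBall x r ⊆ s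

lemma isShiftStable_atTop : IsShiftStable atTop := by
  intro r s hs
  obtain ⟨N, hN⟩ := mem_atTop_sets.mp hs
  filter_upwards [eventually_ge_atTop (N + r)] with x hx y hy
  rw [mem_closedBall, Real.dist_eq, abs_le] at hy
  exact hN y (by linarith)

lemma isShiftStable_atBot : IsShiftStable atBot := by
  intro r s hs
  obtain ⟨N, hN⟩ := mem_atBot_sets.mp hs
  filter_upwards [eventually_le_atBot (N - r)] with x hx y hy
  rw [mem_closedBall, Real.dist_eq, abs_le] at hy
  exact hN y (by linarith)

namespace IsShiftStable

variable {l : Filter ℝ}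

lemma tendsto_of_mem_closedBall (hl : IsShiftStable l) {ξ : ℝ → ℝ} {r : ℝ}
    (hξ : ∀ x, ξ x ∈ closedBall x r) : Tendsto ξ l l :=
  fun s hs => (hl r s hs).mono fun x hx => hx (hξ x)

lemma tendsto_add_const (hl : IsShiftStable l) (a : ℝ) : Tendsto (· + a) l l :=
  hl.tendsto_of_mem_closedBall (r := |a|) fun x => by simp

lemma tendsto_sub_self (hl : IsShiftStable l) {φ : ℝ → ℝ} {M : ℝ}
    (hφ : Tendsto φ l (𝓝 M)) : Tendsto (fun x => φ (x + 1) - φ x) l (𝓝 0) := by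
  simpa using (hφ.comp (hl.tendsto_add_const 1)).sub hφ

lemma tendsto_sub_of_hasDerivAt (hl : IsShiftStable l) {g g' : ℝ → ℝ} {K : ℝ}
    (hg : ∀ x, HasDerivAt g (g' x) x) (hg' : Tendsto g' l (𝓝 K)) :
    Tendsto (fun x => g (x + 1) - g x) l (𝓝 K) := by
  choose ξ hξ hξg using fun x => exists_hasDerivAt_eq_slope g g' (lt_add_one x)
    (fun t _ => (hg t).continuousAt.continuousWithinAt) fun t _ => hg t
  have hξl : Tendsto ξ l l := hl.tendsto_of_mem_closedBall (r := 1) fun x => by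
    rw [mem_closedBall, Real.dist_eq, abs_le]
    constructor <;> linarith [(hξ x).1, (hξ x).2]
  refine (hg'.comp hξl).congr fun x => ?_
  simp only [Function.comp, hξg, add_sub_cancel_left, div_one]

lemma tendsto_second_difference (hl : IsShiftStable l) {F F' F'' : ℝ → ℝ} {K : ℝ}
    (hF : ∀ x, HasDerivAt F (F' x) x) (hF' : ∀ x, HasDerivAt F' (F'' x) x)
    (hF'' : Tendsto F'' l (𝓝 K)) :
    Tendsto (fun x => F (x + 1 + 1) - F (x + 1) - (F (x + 1) - F x)) l (𝓝 K) :=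
  hl.tendsto_sub_of_hasDerivAt (g := fun x => F (x + 1) - F x)
    (fun x => ((hF (x + 1)).comp_add_const x 1).sub (hF x))
    (hl.tendsto_sub_of_hasDerivAt hF' hF'')

lemma eq_zero_of_tendsto_deriv_deriv [l.NeBot] (hl : IsShiftStable l) {F F' F'' : ℝ → ℝ}
    {K M : ℝ} (hF : ∀ x, HasDerivAt F (F' x) x) (hF' : ∀ x, HasDerivAt F' (F'' x) x)
    (hF'' : Tendsto F'' l (𝓝 K)) (hM : Tendsto (fun x => F (x + 1) - F x) l (𝓝 M)) :
    K = 0 :=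
  tendsto_nhds_unique (hl.tendsto_second_difference hF hF' hF'') (hl.tendsto_sub_self hM)

lemma tendsto_integral_mul_of_tendsto [l.IsCountablyGenerated] (hl : IsShiftStable l)
    {J u : ℝ → ℝ} {C L : ℝ} (hJ : Integrable J) (hu : Continuous u) (hC : ∀ x, |u x| ≤ C)
    (hL : Tendsto u l (𝓝 L)) :
    Tendsto (fun x => ∫ y, J (x - y) * u y) l (𝓝 ((∫ z, J z) * L)) := by
  have hsub : ∀ x, ∫ y, J (x - y) * u y = ∫ z, J z * u (x - z) := fun x => by
    simpa using integral_sub_left_eq_self (fun z => J z * u (x - z)) volume x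
  simp_rw [hsub, ← integral_mul_const]
  refine tendsto_integral_filter_of_dominated_convergence (fun z => C * ‖J z‖)
    (Eventually.of_forall fun x => hJ.aestronglyMeasurable.mul
      (hu.comp (continuous_const.sub continuous_id)).aestronglyMeasurable)
    (Eventually.of_forall fun x => Eventually.of_forall fun z => ?_)
    (hJ.norm.const_mul C) (Eventually.of_forall fun z => ?_)
  · rw [norm_mul, Real.norm_eq_abs (u _), mul_comm C]
    exact mul_le_mul_of_nonneg_left (hC _) (norm_nonneg _)
  · simpa [sub_eq_add_neg] using (hL.comp (hl.tendsto_add_const (-z))).const_mul (J z)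

theorem apply_eq_zero_of_tendsto [l.NeBot] [l.IsCountablyGenerated] (hl : IsShiftStable l)
    {J f u : ℝ → ℝ} {ε c C L : ℝ} (hJ : Integrable J) (hJ1 : ∫ z, J z = 1)
    (hf : ContinuousAt f L) (hu : Differentiable ℝ u) (hu' : Differentiable ℝ (deriv u))
    (hC : ∀ x, |u x| ≤ C)
    (heq : ∀ x, ε * deriv (deriv u) x + (∫ y, J (x - y) * u y) - u x
      - c * deriv u x + f (u x) = 0)
    (hL : Tendsto u l (𝓝 L)) : f L = 0 := by
  set V : ℝ → ℝ := fun x => ∫ t in (0)..x, u t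
  have hV : ∀ x, HasDerivAt V (u x) x := fun x =>
    (hu.continuous.integral_hasStrictDerivAt 0 x).hasDerivAt
  have hF : ∀ x, HasDerivAt (fun x => ε * u x - c * V x) (ε * deriv u x - c * u x) x :=
    fun x => ((hu x).hasDerivAt.const_mul ε).sub ((hV x).const_mul c)
  have hF' : ∀ x, HasDerivAt (fun x => ε * deriv u x - c * u x)
      (ε * deriv (deriv u) x - c * deriv u x) x :=
    fun x => ((hu' x).hasDerivAt.const_mul ε).sub ((hu x).hasDerivAt.const_mul c)
  have hF'' : Tendsto (fun x => ε * deriv (deriv u) x - c * deriv u x) l (𝓝 (-f L)) := by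
    have hconv := hl.tendsto_integral_mul_of_tendsto hJ hu.continuous hC hL
    rw [hJ1, one_mul] at hconv
    have h := (hL.sub (hf.tendsto.comp hL)).sub hconv
    rw [show L - f L - L = -f L by ring] at h
    exact h.congr fun x => by simp only [Function.comp]; linarith [heq x]
  have hM : Tendsto (fun x => (ε * u (x + 1) - c * V (x + 1)) - (ε * u x - c * V x)) l
      (𝓝 (ε * 0 - c * L)) :=
    (((hl.tendsto_sub_self hL).const_mul ε).sub
      ((hl.tendsto_sub_of_hasDerivAt hV hL).const_mul c)).congr fun x => by ring
  exact neg_eq_zero.mp (hl.eq_zero_of_tendsto_deriv_deriv hF hF' hF'' hM)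

end IsShiftStable

theorem stmt16_general (J f u : ℝ → ℝ) (ε c : ℝ)
    (hJint : Integrable J) (hJ1 : ∫ z, J z = 1)
    (hf : ContDiff ℝ 1 f)
    (hmono : Monotone u) (hurange : ∀ x, u x ∈ Set.Icc (0:ℝ) 1)
    (hu2 : ContDiff ℝ 2 u)
    (heq : ∀ x, ε * deriv (deriv u) x + (∫ y, J (x - y) * u y) - u x
      - c * deriv u x + f (u x) = 0) :
    ∃ lm lp : ℝ, Tendsto u atBot (nhds lm) ∧ Tendsto u atTop (nhds lp) ∧
      f lm = 0 ∧ f lp = 0 := by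
  have hu : Differentiable ℝ u := hu2.differentiable (by norm_num)
  have hu' : Differentiable ℝ (deriv u) :=
    (ContDiff.iterate_deriv' 1 1 hu2).differentiable one_ne_zero
  have hC : ∀ x, |u x| ≤ 1 := fun x => abs_le.mpr ⟨by linarith [(hurange x).1], (hurange x).2⟩
  have hm : Tendsto u atBot (𝓝 (⨅ x, u x)) :=
    tendsto_atBot_ciInf hmono ⟨0, by rintro _ ⟨x, rfl⟩; exact (hurange x).1⟩
  have hp : Tendsto u atTop (𝓝 (⨆ x, u x)) :=
    tendsto_atTop_ciSup hmono ⟨1, by rintro _ ⟨x, rfl⟩; exact (hurange x).2⟩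
  exact ⟨_, _, hm, hp,
    isShiftStable_atBot.apply_eq_zero_of_tendsto hJint hJ1 hf.continuous.continuousAt hu hu' hC
      heq hm,
    isShiftStable_atTop.apply_eq_zero_of_tendsto hJint hJ1 hf.continuous.continuousAt hu hu' hC
      heq hp⟩

theorem stmt16 (J f u : ℝ → ℝ) (ε c : ℝ) (hε : 0 ≤ ε)
    (hJc : Continuous J) (hJ0 : ∀ z, 0 ≤ J z)
    (hJint : Integrable J) (hJ1 : ∫ z, J z = 1)
    (hJmom : Integrable (fun z => |z| * J z))
    (hf : ContDiff ℝ 1 f) (hf0 : f 0 = 0) (hf1 : f 1 = 0)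
    (hmono : Monotone u) (hurange : ∀ x, u x ∈ Set.Icc (0:ℝ) 1)
    (hu2 : ContDiff ℝ 2 u)
    (heq : ∀ x, ε * deriv (deriv u) x + (∫ y, J (x - y) * u y) - u x
      - c * deriv u x + f (u x) = 0) :
    ∃ lm lp : ℝ, Tendsto u atBot (nhds lm) ∧ Tendsto u atTop (nhds lp) ∧
      f lm = 0 ∧ f lp = 0 :=
  stmt16_general J f u ε c hJint hJ1 hf hmono hurange hu2 heq
end
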